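/- For every f ∈ L^∞(K), the function t ↦ (J_K f)(σ_K(t)) on [0, λ(K)] is Lipschitz with constant ‖f‖_∞ and vanishes at 0; more precisely, for 0 ≤ s < t ≤ λ(K), |(J_K f)(σ_K(t)) − (J_K f)(σ_K(s))| ≤ ‖f‖_∞ (t − s), using that λ([σ_K(s), σ_K(t)] ∩ K) = t − s. -/

import Mathlib

open MeasureTheory Set

/-- Measure projection `π_K`. -/
noncomputable def piProj (K : Set ℝ) (x : ℝ) : ℝ :=
  (volume (Set.Icc (sInf K) x ∩ K)).toReal

/-- Left-endpoint selector `σ_K`. -/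
noncomputable def sigmaSel (K : Set ℝ) (t : ℝ) : ℝ :=
  sInf {x ∈ K | piProj K x = t}

/-- Primitive `J_K f`. -/
noncomputable def JPrim (K : Set ℝ) (f : ℝ → ℝ) (x : ℝ) : ℝ :=
  ∫ y in Set.Icc (sInf K) x ∩ K, f y

/-!
The measure projection `π_K` is monotone and `1`-Lipschitz, and it maps `K` onto `[0, λ(K)]`
(intermediate value theorem, then push the preimage to the largest point of `K` below it). Hence
`σ_K(t)` is a point of `K` with `π_K(σ_K(t)) = t`, so `λ((σ_K(s), σ_K(t)] ∩ K) = t - s`, and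
`J_K f(σ_K(t)) - J_K f(σ_K(s))` is the integral of `f` over that set, bounded by `‖f‖_∞ (t - s)`.
-/

theorem norm_setIntegral_le_eLpNorm_top_mul {α E : Type*} [MeasurableSpace α]
    [NormedAddCommGroup E] [NormedSpace ℝ E] {μ : Measure α} {f : α → E} {s t : Set α}
    (hf : MemLp f ⊤ (μ.restrict s)) (hts : t ⊆ s) (ht : μ t ≠ ⊤) :
    ‖∫ x in t, f x ∂μ‖ ≤ (eLpNorm f ⊤ (μ.restrict s)).toReal * μ.real t := by
  refine norm_setIntegral_le_of_norm_le_const_ae ht.lt_top ?_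
  have hbound : ∀ᵐ x ∂μ.restrict s, ‖f x‖ ≤ (eLpNorm f ⊤ (μ.restrict s)).toReal := by
    filter_upwards [enorm_ae_le_eLpNormEssSup f (μ.restrict s)] with x hx
    rw [← toReal_enorm (f x)]
    exact ENNReal.toReal_mono hf.eLpNorm_ne_top (hx.trans_eq eLpNorm_exponent_top.symm)
  exact ae_mono (Measure.restrict_mono hts le_rfl) hbound

theorem disjoint_Icc_inter_Ioc_inter (K : Set ℝ) (a x y : ℝ) :
    Disjoint (Icc a x ∩ K) (Ioc x y ∩ K) :=
  disjoint_left.2 fun _ hz hz' => hz'.1.1.not_ge hz.1.2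

theorem Icc_sInf_inter_eq_union {K : Set ℝ} (hK : BddBelow K) {x y : ℝ} (hxy : x ≤ y) :
    Icc (sInf K) y ∩ K = (Icc (sInf K) x ∩ K) ∪ (Ioc x y ∩ K) := by
  ext z
  have hsInf_le : z ∈ K → sInf K ≤ z := fun hz => csInf_le hK hz
  simp only [mem_union, mem_inter_iff, mem_Icc, mem_Ioc]
  rcases le_or_gt z x with h | h <;> grind

section

variable {K : Set ℝ}

theorem volume_inter_ne_top (hK : IsCompact K) (A : Set ℝ) : volume (A ∩ K) ≠ ⊤ :=
  ((measure_mono inter_subset_right).trans_lt hK.measure_lt_top).ne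

theorem piProj_eq_add (hK : IsCompact K) {x y : ℝ} (hxy : x ≤ y) :
    piProj K y = piProj K x + volume.real (Ioc x y ∩ K) := by
  rw [piProj, piProj, Icc_sInf_inter_eq_union hK.bddBelow hxy,
    measure_union (disjoint_Icc_inter_Ioc_inter K _ x y)
      (measurableSet_Ioc.inter hK.measurableSet),
    ENNReal.toReal_add (volume_inter_ne_top hK _) (volume_inter_ne_top hK _)]
  rfl

theorem piProj_monotone (hK : IsCompact K) : Monotone (piProj K) := fun _ _ hxy => by
  rw [piProj_eq_add hK hxy]
  exact le_add_of_nonneg_right measureReal_nonneg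

theorem piProj_lipschitz (hK : IsCompact K) : LipschitzWith 1 (piProj K) := by
  refine LipschitzWith.of_le_add_mul 1 fun x y => ?_
  rcases le_total x y with hxy | hyx
  · rw [NNReal.coe_one, one_mul]
    linarith [piProj_monotone hK hxy, dist_nonneg (x := x) (y := y)]
  · have hIoc : volume.real (Ioc y x ∩ K) ≤ x - y :=
      calc volume.real (Ioc y x ∩ K) ≤ volume.real (Ioc y x) :=
            measureReal_mono inter_subset_left measure_Ioc_lt_top.ne
        _ = x - y := by simp [hyx]
    rw [piProj_eq_add hK hyx, Real.dist_eq, abs_of_nonneg (sub_nonneg.2 hyx)]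
    push_cast
    linarith

theorem piProj_sInf : piProj K (sInf K) = 0 := by
  rw [piProj, Icc_self, measure_mono_null inter_subset_left (measure_singleton _),
    ENNReal.toReal_zero]

theorem piProj_sSup (hK : IsCompact K) : piProj K (sSup K) = (volume K).toReal := by
  have hKIcc : K ⊆ Icc (sInf K) (sSup K) := fun _ hz =>
    ⟨csInf_le hK.bddBelow hz, le_csSup hK.bddAbove hz⟩
  rw [piProj, inter_eq_self_of_subset_right hKIcc]

/-- `π_K` is constant on the gaps of `K`, so its value at `x` is already taken at the largest
point of `K` below `x`. -/
theorem exists_mem_piProj_eq_of_sInf_le (hK : IsCompact K) (hne : K.Nonempty) {x : ℝ}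
    (hx : sInf K ≤ x) : ∃ y ∈ K, piProj K y = piProj K x := by
  have hbdd : BddAbove (K ∩ Iic x) := ⟨x, fun _ hz => hz.2⟩
  obtain ⟨hyK, hyx⟩ : sSup (K ∩ Iic x) ∈ K ∩ Iic x :=
    (hK.isClosed.inter isClosed_Iic).csSup_mem ⟨sInf K, hK.sInf_mem hne, hx⟩ hbdd
  have hgap : Ioc (sSup (K ∩ Iic x)) x ∩ K = ∅ :=
    eq_empty_of_forall_notMem fun z ⟨hz, hzK⟩ => hz.1.not_ge (le_csSup hbdd ⟨hzK, hz.2⟩)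
  refine ⟨_, hyK, ?_⟩
  rw [piProj_eq_add hK hyx, hgap, measureReal_empty, add_zero]

theorem exists_mem_piProj_eq (hK : IsCompact K) (hne : K.Nonempty) {t : ℝ} (h0 : 0 ≤ t)
    (ht : t ≤ (volume K).toReal) : ∃ x ∈ K, piProj K x = t := by
  obtain ⟨x, hx, rfl⟩ : t ∈ piProj K '' Icc (sInf K) (sSup K) :=
    intermediate_value_Icc (csInf_le_csSup hne hK.bddBelow hK.bddAbove)
      (piProj_lipschitz hK).continuous.continuousOn
      (by rw [piProj_sInf, piProj_sSup hK]; exact ⟨h0, ht⟩)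
  exact exists_mem_piProj_eq_of_sInf_le hK hne hx.1

theorem sigmaSel_mem (hK : IsCompact K) (hne : K.Nonempty) {t : ℝ} (h0 : 0 ≤ t)
    (ht : t ≤ (volume K).toReal) : sigmaSel K t ∈ K ∧ piProj K (sigmaSel K t) = t := by
  have hclosed : IsClosed {x ∈ K | piProj K x = t} :=
    hK.isClosed.inter (isClosed_eq (piProj_lipschitz hK).continuous continuous_const)
  exact hclosed.csInf_mem (exists_mem_piProj_eq hK hne h0 ht)
    (hK.bddBelow.mono fun _ hx => hx.1)

theorem sigmaSel_zero (hK : IsCompact K) (hne : K.Nonempty) : sigmaSel K 0 = sInf K :=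
  IsLeast.csInf_eq ⟨⟨hK.sInf_mem hne, piProj_sInf⟩, fun _ hx => csInf_le hK.bddBelow hx.1⟩

theorem JPrim_sigmaSel_zero (hK : IsCompact K) (f : ℝ → ℝ) : JPrim K f (sigmaSel K 0) = 0 := by
  rcases K.eq_empty_or_nonempty with rfl | hne
  · simp [JPrim]
  · rw [JPrim, sigmaSel_zero hK hne, Icc_self]
    exact setIntegral_measure_zero _ (measure_mono_null inter_subset_left (measure_singleton _))

theorem JPrim_sub (hK : IsCompact K) {f : ℝ → ℝ} (hf : IntegrableOn f K) {x y : ℝ}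
    (hxy : x ≤ y) : JPrim K f y - JPrim K f x = ∫ z in Ioc x y ∩ K, f z := by
  rw [JPrim, JPrim, Icc_sInf_inter_eq_union hK.bddBelow hxy,
    setIntegral_union (disjoint_Icc_inter_Ioc_inter K _ x y)
      (measurableSet_Ioc.inter hK.measurableSet) (hf.mono_set inter_subset_right)
      (hf.mono_set inter_subset_right), add_sub_cancel_left]

end

theorem stmt12_general (K : Set ℝ) (hK : IsCompact K)
    (f : ℝ → ℝ) (hfb : MemLp f ⊤ (volume.restrict K)) :
    JPrim K f (sigmaSel K 0) = 0 ∧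
    ∀ s t : ℝ, 0 ≤ s → s < t → t ≤ (volume K).toReal →
      (volume (Set.Icc (sigmaSel K s) (sigmaSel K t) ∩ K)).toReal = t - s ∧
      |JPrim K f (sigmaSel K t) - JPrim K f (sigmaSel K s)| ≤
        (eLpNorm f ⊤ (volume.restrict K)).toReal * (t - s) := by
  refine ⟨JPrim_sigmaSel_zero hK f, fun s t hs hst ht => ?_⟩
  have hne : K.Nonempty := nonempty_of_measure_ne_zero fun h => by
    rw [h, ENNReal.toReal_zero] at ht
    linarith
  obtain ⟨-, hπs⟩ := sigmaSel_mem hK hne hs (hst.le.trans ht)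
  obtain ⟨-, hπt⟩ := sigmaSel_mem hK hne (hs.trans hst.le) ht
  have hσ : sigmaSel K s ≤ sigmaSel K t :=
    ((piProj_monotone hK).reflect_lt (by rwa [hπs, hπt])).le
  have hvol : volume.real (Ioc (sigmaSel K s) (sigmaSel K t) ∩ K) = t - s := by
    linarith [piProj_eq_add hK hσ]
  have : IsFiniteMeasure (volume.restrict K) :=
    isFiniteMeasure_restrict.2 hK.measure_lt_top.ne
  refine ⟨by rw [measure_congr (Ioc_ae_eq_Icc.symm.inter (ae_eq_refl K))]; exact hvol, ?_⟩
  rw [JPrim_sub hK (hfb.integrable le_top) hσ, ← Real.norm_eq_abs, ← hvol]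
  exact norm_setIntegral_le_eLpNorm_top_mul hfb inter_subset_right (volume_inter_ne_top hK _)

theorem stmt12 (K : Set ℝ) (hK : IsCompact K) (hpos : 0 < volume K)
    (f : ℝ → ℝ) (hf : Measurable f) (hfb : MemLp f ⊤ (volume.restrict K)) :
    JPrim K f (sigmaSel K 0) = 0 ∧
    ∀ s t : ℝ, 0 ≤ s → s < t → t ≤ (volume K).toReal →
      (volume (Set.Icc (sigmaSel K s) (sigmaSel K t) ∩ K)).toReal = t - s ∧
      |JPrim K f (sigmaSel K t) - JPrim K f (sigmaSel K s)| ≤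
        (eLpNorm f ⊤ (volume.restrict K)).toReal * (t - s) :=
  stmt12_general K hK f hfb
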